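/- Let m ≥ 2, α = [0; overline{1,m}], and γ a real number with ‖m·γ‖ ≠ 0. Then there exist constants c > 0 and η > 0 such that for every real θ and every integer k ≥ 2, |(1/q_k)·∑_{0≤u<q_k} e(γ·S_α(u) + θ·u)| ≤ η·e^{−c·k}. -/

import Mathlib

open Finset
open scoped Classical

/-- e(x) = exp(2πi x) -/
noncomputable def e (x : ℝ) : ℂ := Complex.exp (2 * Real.pi * Complex.I * x)

/-- Denominators of α = [0; 1, m, 1, m, ...]. -/
def ostq (m : ℕ) : ℕ → ℕ
  | 0 => 1
  | 1 => 1
  | (i+2) => (if (i+2) % 2 = 0 then m * ostq m (i+1) else ostq m (i+1)) + ostq m i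

/-- φ(m) = (m + 2 + √(m² + 4m))/2. -/
noncomputable def phi (m : ℕ) : ℝ := ((m : ℝ) + 2 + Real.sqrt ((m : ℝ)^2 + 4*m)) / 2

/-- Partial quotients of α = [0; 1, m, 1, m, ...] : a_j = m if j even, 1 if j odd. -/
def pq (m j : ℕ) : ℕ := if j % 2 = 0 then m else 1

/-- Markov condition on digit sequences. -/
def Markov (m : ℕ) (ε : ℕ → ℕ) : Prop :=
  ε 0 < pq m 1 ∧ ∀ i, 1 ≤ i → ε i ≤ pq m (i+1) ∧ (ε i = pq m (i+1) → ε (i-1) = 0)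

/-- ε is the (finitely supported) Ostrowski digit sequence of n. -/
def IsOstRep (m n : ℕ) (ε : ℕ → ℕ) : Prop :=
  Markov m ε ∧ ∃ K, (∀ j, K ≤ j → ε j = 0) ∧ n = ∑ i ∈ Finset.range K, ε i * ostq m i

/-- The Ostrowski digits of n. -/
noncomputable def ostEps (m n : ℕ) : ℕ → ℕ :=
  if h : ∃ ε, IsOstRep m n ε then h.choose else fun _ => 0

/-- Ostrowski sum-of-digits function S_α. -/
noncomputable def Sfull (m n : ℕ) : ℕ := ∑ᶠ i, ostEps m n i

/-- Truncated Ostrowski sum-of-digits function S_{α,k}. -/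
noncomputable def Strunc (m k n : ℕ) : ℕ := ∑ i ∈ Finset.range k, ostEps m n i

/-- Distance to the nearest integer. -/
noncomputable def nint (x : ℝ) : ℝ := |x - round x|

/-!
Write `T_k` for the sum over `u < q_k` and `y(q) = γ + θ q`. Dividing by `q_{k+1}` with
remainder is the greedy Ostrowski step: `[0, q_{k+2})` consists of `a_{k+2}` shifted copies of
`[0, q_{k+1})` and one of `[0, q_k)`, and the digit sum grows by the index `j` of the copy. Hence
`T_{k+2} = (∑_{j < a_{k+2}} e(j y(q_{k+1}))) T_{k+1} + e(a_{k+2} y(q_{k+1})) T_k`, so the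
quantities `V_k = max (|T_{k+1}| / q_{k+1}) (|T_k| / q_k)` do not increase. When `a_{k+2} = m`,
the geometric sum has norm at most `m - 4 ‖y(q_{k+1})‖²`, and `V` then drops by a fixed factor.
From `(m + 2) q_{2t+3} = q_{2t+5} + q_{2t+1}` we get
`m γ = (m + 2) y(q_{2t+3}) - y(q_{2t+5}) - y(q_{2t+1})`, so one of these three odd-index
denominators has `‖y‖ ≥ ‖m γ‖ / (m + 4)`: `V` contracts at least once every six steps.
-/

section Denominators

variable {m : ℕ}

lemma pq_pos (hm : 0 < m) (j : ℕ) : 0 < pq m j := by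
  unfold pq; split <;> omega

lemma pq_le (hm : 0 < m) (j : ℕ) : pq m j ≤ m := by
  unfold pq; split <;> omega

lemma ostq_add_two (k : ℕ) : ostq m (k + 2) = pq m (k + 2) * ostq m (k + 1) + ostq m k := by
  simp only [ostq, pq]; split <;> ring

lemma ostq_pos (k : ℕ) : 0 < ostq m k := by
  induction k using Nat.strong_induction_on with
  | _ k ih =>
    match k with
    | 0 | 1 => exact Nat.one_pos
    | k + 2 => rw [ostq_add_two]; have := ih k (by omega); positivity

lemma ostq_le_succ (hm : 0 < m) (k : ℕ) : ostq m k ≤ ostq m (k + 1) := by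
  cases k with
  | zero => rfl
  | succ k =>
    rw [ostq_add_two]
    nlinarith [pq_pos hm (k + 2), ostq_pos (m := m) k]

lemma ostq_monotone (hm : 0 < m) : Monotone (ostq m) :=
  monotone_nat_of_le_succ (ostq_le_succ hm)

lemma ostq_succ_le (hm : 0 < m) (k : ℕ) : ostq m (k + 1) ≤ (m + 1) * ostq m k := by
  cases k with
  | zero => simp [ostq]
  | succ k =>
    rw [ostq_add_two]
    nlinarith [pq_le hm (k + 2), ostq_le_succ hm k]

lemma lt_ostq_succ (hm : 0 < m) (k : ℕ) : k < ostq m (k + 1) := by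
  induction k with
  | zero => exact ostq_pos 1
  | succ k ih =>
    rw [ostq_add_two]
    nlinarith [pq_pos hm (k + 2), ostq_pos (m := m) k]

lemma ostq_odd_recurrence (t : ℕ) :
    (m + 2) * ostq m (2 * t + 3) = ostq m (2 * t + 5) + ostq m (2 * t + 1) := by
  have h3 := ostq_add_two (m := m) (2 * t + 1)
  have h4 := ostq_add_two (m := m) (2 * t + 2)
  have h5 := ostq_add_two (m := m) (2 * t + 3)
  have e3 : (2 * t + 1 + 2) % 2 = 1 := by omega
  have e4 : (2 * t + 2 + 2) % 2 = 0 := by omega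
  have e5 : (2 * t + 3 + 2) % 2 = 1 := by omega
  simp only [pq, e3, e4, e5] at h3 h4 h5
  simp only [Nat.add_assoc, Nat.reduceAdd, if_true, one_ne_zero, if_false, one_mul] at h3 h4 h5
  linarith

end Denominators

lemma Finset.sum_range_eq_of_eq_zero {M : Type*} [AddCommMonoid M] {f : ℕ → M}
    {K K' : ℕ} (hK : ∀ j, K ≤ j → f j = 0) (hKK' : K ≤ K') :
    ∑ i ∈ range K', f i = ∑ i ∈ range K, f i :=
  (sum_subset (range_subset_range.2 hKK') fun i _ hi ↦ hK i (by simpa using hi)).symm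

lemma Finset.sum_range_mul {M : Type*} [AddCommMonoid M] (f : ℕ → M) (a b : ℕ) :
    ∑ u ∈ range (a * b), f u = ∑ j ∈ range a, ∑ v ∈ range b, f (j * b + v) := by
  induction a with
  | zero => simp
  | succ a ih => rw [Nat.succ_mul, sum_range_add, ih, sum_range_succ]

section Ostrowski

variable {m : ℕ}

lemma Markov.sum_lt_ostq {ε : ℕ → ℕ} (hε : Markov m ε) (K : ℕ) :
    ∑ i ∈ range K, ε i * ostq m i < ostq m K := by
  induction K using Nat.strong_induction_on with
  | _ K ih =>
    match K with
    | 0 => simp [ostq]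
    | 1 => simpa [ostq, pq] using hε.1
    | K + 2 =>
      obtain ⟨hle, hcarry⟩ := hε.2 (K + 1) (by omega)
      rw [sum_range_succ, ostq_add_two]
      rcases hle.lt_or_eq with hlt | heq
      · have := ih (K + 1) (by omega)
        nlinarith
      · have hK : ε K = 0 := hcarry heq
        have heq : ε (K + 1) = pq m (K + 2) := heq
        have := ih K (by omega)
        rw [sum_range_succ, hK, heq]
        omega

lemma Markov.sum_lt_of_lt {ε ε' : ℕ → ℕ} (hε : Markov m ε) {N : ℕ}
    (h : ε N < ε' N) :
    ∑ i ∈ range (N + 1), ε i * ostq m i < ∑ i ∈ range (N + 1), ε' i * ostq m i := by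
  rw [sum_range_succ, sum_range_succ]
  have := hε.sum_lt_ostq N
  have := Nat.mul_le_mul_right (ostq m N) h
  rw [Nat.succ_mul] at this
  omega

lemma Markov.eq_of_sum_eq {ε ε' : ℕ → ℕ} (hε : Markov m ε) (hε' : Markov m ε')
    {N : ℕ} (h : ∑ i ∈ range N, ε i * ostq m i = ∑ i ∈ range N, ε' i * ostq m i) :
    ∀ i < N, ε i = ε' i := by
  induction N with
  | zero => simp
  | succ N ih =>
    have htop : ε N = ε' N := by
      rcases lt_trichotomy (ε N) (ε' N) with hlt | heq | hgt
      · exact absurd h (hε.sum_lt_of_lt hlt).ne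
      · exact heq
      · exact absurd h (hε'.sum_lt_of_lt hgt).ne'
    rw [sum_range_succ, sum_range_succ, htop, add_left_inj] at h
    intro i hi
    rcases (Nat.lt_succ_iff_lt_or_eq.1 hi) with hi | rfl
    · exact ih h i hi
    · exact htop

lemma IsOstRep.eq_sum_range {n : ℕ} {ε : ℕ → ℕ} (h : IsOstRep m n ε) {K : ℕ}
    (hK : ∀ j, K ≤ j → ε j = 0) : n = ∑ i ∈ range K, ε i * ostq m i := by
  obtain ⟨-, K₀, hK₀, rfl⟩ := h
  rw [← sum_range_eq_of_eq_zero (fun j hj ↦ by simp [hK₀ j hj]) (le_max_left K₀ K),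
    sum_range_eq_of_eq_zero (fun j hj ↦ by simp [hK j hj]) (le_max_right K₀ K)]

lemma IsOstRep.unique {n : ℕ} {ε ε' : ℕ → ℕ} (h : IsOstRep m n ε)
    (h' : IsOstRep m n ε') : ε = ε' := by
  obtain ⟨K, hK⟩ := h.2
  obtain ⟨K', hK'⟩ := h'.2
  have hN : ∀ j, max K K' ≤ j → ε j = 0 ∧ ε' j = 0 := fun j hj ↦
    ⟨hK.1 j (le_of_max_le_left hj), hK'.1 j (le_of_max_le_right hj)⟩
  funext i
  by_cases hi : i < max K K'
  · refine h.1.eq_of_sum_eq h'.1 ?_ i hi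
    rw [← h.eq_sum_range fun j hj ↦ (hN j hj).1, ← h'.eq_sum_range fun j hj ↦ (hN j hj).2]
  · rw [(hN i (not_lt.1 hi)).1, (hN i (not_lt.1 hi)).2]

lemma IsOstRep.eq_zero_of_lt_ostq (hm : 0 < m) {n t : ℕ} {ε : ℕ → ℕ} (h : IsOstRep m n ε)
    (hn : n < ostq m t) : ∀ i, t ≤ i → ε i = 0 := by
  obtain ⟨-, K, hK, rfl⟩ := h
  intro i hi
  by_contra hne
  have hiK : i < K := by by_contra h; exact hne (hK i (not_lt.1 h))
  have : ostq m i ≤ ε i * ostq m i := Nat.le_mul_of_pos_left _ (Nat.pos_of_ne_zero hne)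
  have :=
    single_le_sum (f := fun i ↦ ε i * ostq m i) (fun _ _ ↦ Nat.zero_le _) (mem_range.2 hiK)
  have := ostq_monotone hm hi
  omega

lemma IsOstRep.update (hm : 0 < m) {v k j : ℕ} {ε : ℕ → ℕ} (h : IsOstRep m v ε)
    (hv : v < ostq m (k + 1)) (hjv : j * ostq m (k + 1) + v < ostq m (k + 2)) :
    IsOstRep m (j * ostq m (k + 1) + v) (Function.update ε (k + 1) j) := by
  have hsupp := h.eq_zero_of_lt_ostq hm hv
  have hq := ostq_add_two (m := m) k
  have hj : j ≤ pq m (k + 2) := by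
    by_contra hj
    have := Nat.mul_le_mul_right (ostq m (k + 1)) (show pq m (k + 2) + 1 ≤ j by omega)
    have := ostq_le_succ hm k
    rw [Nat.succ_mul] at *
    omega
  have hcarry : j = pq m (k + 2) → ε k = 0 := fun hj ↦
    h.eq_zero_of_lt_ostq hm (t := k) (by subst hj; omega) k le_rfl
  refine ⟨⟨?_, fun i hi ↦ ?_⟩, k + 2, fun i hi ↦ ?_, ?_⟩
  · rw [Function.update_of_ne (by omega)]
    exact h.1.1
  · rcases eq_or_ne i (k + 1) with rfl | hik
    · rw [Function.update_self, Function.update_of_ne (by omega), Nat.add_sub_cancel]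
      exact ⟨hj, hcarry⟩
    · rw [Function.update_of_ne hik]
      refine ⟨(h.1.2 i hi).1, fun heq ↦ ?_⟩
      rcases eq_or_ne (i - 1) (k + 1) with hi' | hi'
      · have := pq_pos hm (i + 1)
        have := hsupp i (by omega)
        omega
      · rw [Function.update_of_ne hi']
        exact (h.1.2 i hi).2 heq
  · rw [Function.update_of_ne (by omega)]
    exact hsupp i (by omega)
  · rw [sum_range_succ, Function.update_self, h.eq_sum_range hsupp, add_comm]
    congr 1
    refine sum_congr rfl fun i hi ↦ ?_
    rw [Function.update_of_ne (by simp at hi; omega)]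

lemma exists_isOstRep_of_lt (hm : 0 < m) (k : ℕ) : ∀ n < ostq m k, ∃ ε, IsOstRep m n ε := by
  induction k using Nat.strong_induction_on with
  | _ k ih =>
    intro n hn
    match k with
    | 0 | 1 =>
      obtain rfl : n = 0 := by simpa [ostq] using hn
      exact ⟨fun _ ↦ 0, ⟨by simp [pq], fun _ _ ↦ by simp⟩, 0, by simp⟩
    | k + 2 =>
      have hq := ostq_pos (m := m) (k + 1)
      obtain ⟨ε, hε⟩ := ih (k + 1) (by omega) (n % ostq m (k + 1)) (Nat.mod_lt _ hq)
      have hdiv := Nat.div_add_mod' n (ostq m (k + 1))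
      exact ⟨_, hdiv ▸ hε.update hm (Nat.mod_lt _ hq) (hdiv ▸ hn)⟩

lemma exists_isOstRep (hm : 0 < m) (n : ℕ) : ∃ ε, IsOstRep m n ε :=
  exists_isOstRep_of_lt hm (n + 1) n (lt_ostq_succ hm n)

lemma isOstRep_ostEps (hm : 0 < m) (n : ℕ) : IsOstRep m n (ostEps m n) := by
  rw [ostEps, dif_pos (exists_isOstRep hm n)]
  exact (exists_isOstRep hm n).choose_spec

lemma IsOstRep.Sfull_eq (hm : 0 < m) {n K : ℕ} {ε : ℕ → ℕ} (h : IsOstRep m n ε)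
    (hK : ∀ j, K ≤ j → ε j = 0) : Sfull m n = ∑ i ∈ range K, ε i := by
  rw [Sfull, (isOstRep_ostEps hm n).unique h]
  refine finsum_eq_sum_of_support_subset _ fun i hi ↦ ?_
  by_contra hiK
  exact hi (hK i (by simpa using hiK))

lemma Sfull_mul_add (hm : 0 < m) {v k j : ℕ} (hv : v < ostq m (k + 1))
    (hjv : j * ostq m (k + 1) + v < ostq m (k + 2)) :
    Sfull m (j * ostq m (k + 1) + v) = j + Sfull m v := by
  have h := isOstRep_ostEps hm v
  have hsupp := h.eq_zero_of_lt_ostq hm hv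
  rw [(h.update hm hv hjv).Sfull_eq hm (K := k + 2) fun i hi ↦ ?_, h.Sfull_eq hm hsupp,
    sum_range_succ, Function.update_self, sum_update_of_notMem (by simp), add_comm]
  rw [Function.update_of_ne (by omega)]
  exact hsupp i (by omega)

end Ostrowski

lemma nint_nonneg (x : ℝ) : 0 ≤ nint x := abs_nonneg _

lemma nint_eq_norm (x : ℝ) : nint x = ‖(x : UnitAddCircle)‖ :=
  UnitAddCircle.norm_eq.symm

lemma nint_nsmul_sub_sub_le (n : ℕ) (a b c : ℝ) :
    nint (n * a - b - c) ≤ n * nint a + nint b + nint c := by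
  simp only [nint_eq_norm, AddCircle.coe_sub, ← nsmul_eq_mul, AddCircle.coe_nsmul]
  refine (norm_sub_le _ _).trans (add_le_add_left ((norm_sub_le _ _).trans ?_) _)
  rw [nsmul_eq_mul]
  gcongr
  exact norm_nsmul_le

section Exponential

variable {m : ℕ}

lemma e_add (x y : ℝ) : e (x + y) = e x * e y := by
  rw [e, e, e, ← Complex.exp_add]; push_cast; ring_nf

lemma e_eq_exp_I_mul (x : ℝ) : e x = Complex.exp (Complex.I * ↑(2 * Real.pi * x)) := by
  rw [e]; push_cast; ring_nf

lemma norm_e (x : ℝ) : ‖e x‖ = 1 := by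
  rw [e_eq_exp_I_mul, Complex.norm_exp_I_mul_ofReal]

lemma e_intCast (n : ℤ) : e n = 1 := by
  rw [e, ← Complex.exp_int_mul_two_pi_mul_I n]; push_cast; ring_nf

lemma e_half : e (1 / 2) = -1 := by
  rw [e, ← Complex.exp_pi_mul_I]; push_cast; ring_nf

lemma e_sub_round (x : ℝ) : e (x - round x) = e x := by
  rw [sub_eq_add_neg, e_add, ← Int.cast_neg, e_intCast, mul_one]

lemma norm_sum_e_le {ι : Type*} (s : Finset ι) (f : ι → ℝ) :
    ‖∑ i ∈ s, e (f i)‖ ≤ s.card :=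
  (norm_sum_le _ _).trans (by simp [norm_e])

lemma norm_one_add_e (x : ℝ) : ‖1 + e x‖ = 2 * |Real.cos (Real.pi * x)| := by
  have h : 1 + e x = -(Complex.exp (Complex.I * ↑(2 * Real.pi * (x + 1 / 2))) - 1) := by
    rw [← e_eq_exp_I_mul, e_add, e_half]
    ring
  rw [h, norm_neg, Complex.norm_exp_I_mul_ofReal_sub_one, norm_mul, Real.norm_eq_abs,
    Real.norm_eq_abs, abs_two]
  congr 2
  rw [show 2 * Real.pi * (x + 1 / 2) / 2 = Real.pi * x + Real.pi / 2 by ring,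
    Real.sin_add_pi_div_two]

lemma norm_one_add_e_le (x : ℝ) : ‖1 + e x‖ ≤ 2 - 4 * nint x ^ 2 := by
  set s := x - round x
  have hs : |s| ≤ 1 / 2 := abs_sub_round x
  have hπs : |Real.pi * s| ≤ Real.pi / 2 := by
    rw [abs_mul, abs_of_pos Real.pi_pos]; nlinarith [Real.pi_pos]
  have hcos : 0 ≤ Real.cos (Real.pi * s) :=
    Real.cos_nonneg_of_mem_Icc (abs_le.1 hπs)
  have hquad := Real.cos_le_one_sub_mul_cos_sq (x := Real.pi * s) (by linarith [Real.pi_pos])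
  have hnint : nint x ^ 2 = s ^ 2 := sq_abs s
  rw [← e_sub_round, norm_one_add_e, abs_of_nonneg hcos, hnint]
  field_simp at hquad
  nlinarith [Real.pi_pos]

lemma norm_sum_range_e_le (hm : 2 ≤ m) (x : ℝ) :
    ‖∑ j ∈ range m, e (j * x)‖ ≤ m - 4 * nint x ^ 2 := by
  obtain ⟨n, rfl⟩ := Nat.exists_eq_add_of_le hm
  rw [sum_range_add]
  refine (norm_add_le _ _).trans ?_
  have h2 : ∑ j ∈ range 2, e (j * x) = 1 + e x := by
    simp [sum_range_succ, e]
  rw [h2]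
  have := norm_sum_e_le (range n) fun j ↦ ((2 + j : ℕ) : ℝ) * x
  have := norm_one_add_e_le x
  simp only [card_range] at *
  push_cast at *
  linarith

end Exponential

section ExpSum

variable {m : ℕ}

noncomputable def ostSum (m : ℕ) (γ θ : ℝ) (k : ℕ) : ℂ :=
  ∑ u ∈ range (ostq m k), e (γ * Sfull m u + θ * u)

noncomputable def blockFactor (m : ℕ) (γ θ : ℝ) (k : ℕ) : ℂ :=
  ∑ j ∈ range (pq m (k + 2)), e (j * (γ + θ * ostq m (k + 1)))

lemma norm_blockFactor_le (γ θ : ℝ) (k : ℕ) :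
    ‖blockFactor m γ θ k‖ ≤ pq m (k + 2) := by
  simpa [blockFactor] using
    norm_sum_e_le (range (pq m (k + 2))) fun j ↦ j * (γ + θ * ostq m (k + 1))

lemma e_summand_mul_add (hm : 0 < m) (γ θ : ℝ) {v k j : ℕ} (hv : v < ostq m (k + 1))
    (hjv : j * ostq m (k + 1) + v < ostq m (k + 2)) :
    e (γ * Sfull m (j * ostq m (k + 1) + v) + θ * ↑(j * ostq m (k + 1) + v)) =
      e (j * (γ + θ * ostq m (k + 1))) * e (γ * Sfull m v + θ * v) := by
  rw [Sfull_mul_add hm hv hjv, ← e_add]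
  push_cast
  ring_nf

lemma ostSum_add_two (hm : 0 < m) (γ θ : ℝ) (k : ℕ) :
    ostSum m γ θ (k + 2) = blockFactor m γ θ k * ostSum m γ θ (k + 1) +
      e (pq m (k + 2) * (γ + θ * ostq m (k + 1))) * ostSum m γ θ k := by
  have hq := ostq_add_two (m := m) k
  have hqk := ostq_le_succ hm k
  rw [ostSum, hq, sum_range_add, sum_range_mul, blockFactor, sum_mul, ostSum, ostSum, mul_sum]
  congr 1
  · refine sum_congr rfl fun j hj ↦ ?_
    rw [mul_sum]
    refine sum_congr rfl fun v hv ↦ ?_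
    simp only [mem_range] at hj hv
    refine e_summand_mul_add hm γ θ hv ?_
    nlinarith
  · refine sum_congr rfl fun v hv ↦ ?_
    simp only [mem_range] at hv
    exact e_summand_mul_add hm γ θ (by omega) (by omega)

lemma norm_ostSum_add_two_le (hm : 0 < m) (γ θ : ℝ) (k : ℕ) :
    ‖ostSum m γ θ (k + 2)‖ ≤
      ‖blockFactor m γ θ k‖ * ‖ostSum m γ θ (k + 1)‖ + ‖ostSum m γ θ k‖ := by
  rw [ostSum_add_two hm]
  refine (norm_add_le _ _).trans_eq ?_
  rw [norm_mul, norm_mul, norm_e, one_mul]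

lemma norm_ostSum_le (γ θ : ℝ) (k : ℕ) : ‖ostSum m γ θ k‖ ≤ ostq m k := by
  simpa [ostSum] using norm_sum_e_le (range (ostq m k)) fun u ↦ γ * Sfull m u + θ * u

end ExpSum

lemma div_le_one_sub_div_mul {r Q Q₁ C δ V : ℝ} (hQ : 0 < Q) (hC : 0 < C)
    (hQC : Q ≤ C * Q₁) (hδV : 0 ≤ δ * V) (h : r ≤ (Q - δ * Q₁) * V) :
    r / Q ≤ (1 - δ / C) * V := by
  have := mul_le_mul_of_nonneg_left ((div_le_iff₀' hC).2 hQC) hδV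
  have hexp : (1 - δ / C) * V * Q = (Q - δ * Q₁) * V + δ * V * (Q₁ - Q / C) := by ring
  rw [div_le_iff₀ hQ, hexp]
  nlinarith

section Contraction

variable {m : ℕ} (γ θ : ℝ)

noncomputable def ostAvg (m : ℕ) (γ θ : ℝ) (k : ℕ) : ℝ :=
  ‖ostSum m γ θ k‖ / ostq m k

noncomputable def ostAvgMax (m : ℕ) (γ θ : ℝ) (k : ℕ) : ℝ :=
  max (ostAvg m γ θ (k + 1)) (ostAvg m γ θ k)

lemma ostAvgMax_nonneg (k : ℕ) : 0 ≤ ostAvgMax m γ θ k :=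
  le_max_of_le_right (by unfold ostAvg; positivity)

lemma ostAvgMax_zero_le_one : ostAvgMax m γ θ 0 ≤ 1 := by
  refine max_le ?_ ?_ <;>
    exact div_le_one_of_le₀ (norm_ostSum_le γ θ _) (Nat.cast_nonneg _)

lemma norm_ostSum_le_ostq_mul (k : ℕ) :
    ‖ostSum m γ θ k‖ ≤ ostq m k * ostAvgMax m γ θ k ∧
      ‖ostSum m γ θ (k + 1)‖ ≤ ostq m (k + 1) * ostAvgMax m γ θ k := by
  have h (j : ℕ) : ‖ostSum m γ θ j‖ = ostq m j * ostAvg m γ θ j := by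
    rw [ostAvg, mul_div_cancel₀ _ (Nat.cast_ne_zero.2 (ostq_pos j).ne')]
  rw [h, h]
  exact ⟨by gcongr; exact le_max_right _ _, by gcongr; exact le_max_left _ _⟩

lemma norm_ostSum_add_two_le_sub (hm : 0 < m) (k : ℕ) {δ : ℝ}
    (hG : ‖blockFactor m γ θ k‖ ≤ pq m (k + 2) - δ) :
    ‖ostSum m γ θ (k + 2)‖ ≤
      (ostq m (k + 2) - δ * ostq m (k + 1)) * ostAvgMax m γ θ k := by
  obtain ⟨h0, h1⟩ := norm_ostSum_le_ostq_mul γ θ k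
  have hq : (ostq m (k + 2) : ℝ) = pq m (k + 2) * ostq m (k + 1) + ostq m k := by
    exact_mod_cast ostq_add_two k
  calc ‖ostSum m γ θ (k + 2)‖
      ≤ ‖blockFactor m γ θ k‖ * ‖ostSum m γ θ (k + 1)‖ + ‖ostSum m γ θ k‖ :=
        norm_ostSum_add_two_le hm γ θ k
    _ ≤ (pq m (k + 2) - δ) * (ostq m (k + 1) * ostAvgMax m γ θ k) +
          ostq m k * ostAvgMax m γ θ k := by
        gcongr
        · exact (norm_nonneg _).trans hG
    _ = (ostq m (k + 2) - δ * ostq m (k + 1)) * ostAvgMax m γ θ k := by rw [hq]; ring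

lemma ostAvgMax_antitone (hm : 0 < m) : Antitone (ostAvgMax m γ θ) := by
  refine antitone_nat_of_succ_le fun k ↦ max_le ?_ (le_max_left _ _)
  have h := norm_ostSum_add_two_le_sub γ θ hm k (δ := 0)
    (by simpa using norm_blockFactor_le γ θ k)
  rw [zero_mul, sub_zero] at h
  exact div_le_of_le_mul₀ (Nat.cast_nonneg _) (ostAvgMax_nonneg γ θ k) (by linarith)

lemma ostAvgMax_add_two_le (hm : 2 ≤ m) {k : ℕ} (hk : Even k) {δ : ℝ} (hδ : 0 ≤ δ)
    (hδk : δ ≤ 4 * nint (γ + θ * ostq m (k + 1)) ^ 2) :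
    ostAvgMax m γ θ (k + 2) ≤ (1 - δ / (m + 1) ^ 2) * ostAvgMax m γ θ k := by
  have hm0 : 0 < m := by omega
  set V := ostAvgMax m γ θ k
  have hV : 0 ≤ V := ostAvgMax_nonneg γ θ k
  have ha : pq m (k + 2) = m := by simp [pq, Nat.even_iff.1 hk]
  have hT2 := norm_ostSum_add_two_le_sub γ θ hm0 k (δ := δ) (by
    rw [blockFactor, ha]; exact (norm_sum_range_e_le hm _).trans (by linarith))
  -- The deficit `δ q_{k+1} V` survives one more step, and `q_{k+3} ≤ (m + 1)² q_{k+1}`.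
  have hT3 : ‖ostSum m γ θ (k + 3)‖ ≤ (ostq m (k + 3) - δ * ostq m (k + 1)) * V := by
    have hG := norm_blockFactor_le (m := m) γ θ (k + 1)
    have hq : (ostq m (k + 3) : ℝ) = pq m (k + 3) * ostq m (k + 2) + ostq m (k + 1) := by
      exact_mod_cast ostq_add_two (k + 1)
    have ha1 : (1 : ℝ) ≤ pq m (k + 3) := by exact_mod_cast pq_pos hm0 _
    have hδqV : 0 ≤ δ * ostq m (k + 1) * V := by positivity
    calc ‖ostSum m γ θ (k + 3)‖
        ≤ ‖blockFactor m γ θ (k + 1)‖ * ‖ostSum m γ θ (k + 2)‖ +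
            ‖ostSum m γ θ (k + 1)‖ :=
          norm_ostSum_add_two_le hm0 γ θ _
      _ ≤ pq m (k + 3) * ((ostq m (k + 2) - δ * ostq m (k + 1)) * V) +
            ostq m (k + 1) * V := by
          gcongr
          exact (norm_ostSum_le_ostq_mul γ θ k).2
      _ ≤ (ostq m (k + 3) - δ * ostq m (k + 1)) * V := by rw [hq]; nlinarith
  have hq2 : ostq m (k + 2) ≤ (m + 1) ^ 2 * ostq m (k + 1) := by
    nlinarith [ostq_succ_le hm0 (k + 1)]
  have hq3 : ostq m (k + 3) ≤ (m + 1) ^ 2 * ostq m (k + 1) := by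
    nlinarith [ostq_succ_le hm0 (k + 1), ostq_succ_le hm0 (k + 2)]
  have hδV : 0 ≤ δ * V := mul_nonneg hδ hV
  exact max_le
    (div_le_one_sub_div_mul (by exact_mod_cast ostq_pos _) (by positivity)
      (by exact_mod_cast hq3) hδV hT3)
    (div_le_one_sub_div_mul (by exact_mod_cast ostq_pos _) (by positivity)
      (by exact_mod_cast hq2) hδV hT2)

end Contraction

lemma exists_even_nint_ge (m : ℕ) (γ θ : ℝ) (t : ℕ) :
    ∃ k, 2 * t ≤ k ∧ k ≤ 2 * t + 4 ∧ Even k ∧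
      nint (m * γ) / (m + 4) ≤ nint (γ + θ * ostq m (k + 1)) := by
  by_contra! h
  have h0 : nint (γ + θ * ostq m (2 * t + 1)) < nint (m * γ) / (m + 4) :=
    h (2 * t) le_rfl (by omega) (even_two_mul t)
  have h1 : nint (γ + θ * ostq m (2 * t + 3)) < nint (m * γ) / (m + 4) :=
    h (2 * t + 2) (by omega) (by omega) ⟨t + 1, by ring⟩
  have h2 : nint (γ + θ * ostq m (2 * t + 5)) < nint (m * γ) / (m + 4) :=
    h (2 * t + 4) (by omega) le_rfl ⟨t + 2, by ring⟩
  have hrec : ((m + 2 : ℕ) : ℝ) * ostq m (2 * t + 3) =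
      ostq m (2 * t + 5) + ostq m (2 * t + 1) := by
    exact_mod_cast ostq_odd_recurrence t
  have hid : (m : ℝ) * γ = ((m + 2 : ℕ) : ℝ) * (γ + θ * ostq m (2 * t + 3)) -
      (γ + θ * ostq m (2 * t + 5)) - (γ + θ * ostq m (2 * t + 1)) := by
    push_cast at hrec ⊢
    linear_combination (-θ) * hrec
  have := nint_nsmul_sub_sub_le (m + 2) (γ + θ * ostq m (2 * t + 3))
    (γ + θ * ostq m (2 * t + 5)) (γ + θ * ostq m (2 * t + 1))
  rw [← hid] at this
  have hm4 : (0 : ℝ) < m + 4 := by positivity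
  rw [lt_div_iff₀ hm4] at h0 h1 h2
  push_cast at this
  nlinarith [nint_nonneg (γ + θ * ostq m (2 * t + 3))]

noncomputable def decayRate (m : ℕ) (γ : ℝ) : ℝ :=
  1 - 4 * (nint (m * γ) / (m + 4)) ^ 2 / (m + 1) ^ 2

lemma decayRate_pos (m : ℕ) (γ : ℝ) : 0 < decayRate m γ := by
  have h : nint (m * γ) ≤ 1 / 2 := abs_sub_round _
  have hζ : nint (m * γ) / (m + 4) ≤ 1 / 8 :=
    div_le_of_le_mul₀ (by positivity) (by norm_num) (by nlinarith [nint_nonneg (m * γ)])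
  have hζ0 : 0 ≤ nint (m * γ) / (m + 4) := div_nonneg (nint_nonneg _) (by positivity)
  have hm1 : (1 : ℝ) ≤ (m + 1) ^ 2 := one_le_pow₀ (by simp)
  rw [decayRate, sub_pos, div_lt_one (by positivity)]
  nlinarith

lemma decayRate_lt_one {m : ℕ} {γ : ℝ} (hγ : nint (m * γ) ≠ 0) : decayRate m γ < 1 := by
  have : 0 < nint (m * γ) := lt_of_le_of_ne (nint_nonneg _) hγ.symm
  rw [decayRate, sub_lt_self_iff]
  positivity

section Decay

variable {m : ℕ} (γ θ : ℝ)

lemma ostAvgMax_add_six_le (hm : 2 ≤ m) (t : ℕ) :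
    ostAvgMax m γ θ (2 * t + 6) ≤ decayRate m γ * ostAvgMax m γ θ (2 * t) := by
  have hanti := ostAvgMax_antitone γ θ (m := m) (by omega)
  obtain ⟨k, hk₁, hk₂, hk, hζ⟩ := exists_even_nint_ge m γ θ t
  have hζ0 : 0 ≤ nint (m * γ) / (m + 4) := div_nonneg (nint_nonneg _) (by positivity)
  calc ostAvgMax m γ θ (2 * t + 6) ≤ ostAvgMax m γ θ (k + 2) := hanti (by omega)
    _ ≤ decayRate m γ * ostAvgMax m γ θ k :=
        ostAvgMax_add_two_le γ θ hm hk (by positivity) (by gcongr)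
    _ ≤ decayRate m γ * ostAvgMax m γ θ (2 * t) :=
        mul_le_mul_of_nonneg_left (hanti hk₁) (decayRate_pos m γ).le

lemma ostAvgMax_le_decayRate_pow (hm : 2 ≤ m) (k : ℕ) :
    ostAvgMax m γ θ k ≤ decayRate m γ ^ (k / 6) := by
  have hsix (s : ℕ) : ostAvgMax m γ θ (6 * s) ≤ decayRate m γ ^ s := by
    induction s with
    | zero => simpa using ostAvgMax_zero_le_one γ θ
    | succ s ih =>
      have hstep := ostAvgMax_add_six_le γ θ hm (3 * s)
      rw [show 2 * (3 * s) + 6 = 6 * (s + 1) by ring, show 2 * (3 * s) = 6 * s by ring]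
        at hstep
      calc ostAvgMax m γ θ (6 * (s + 1)) ≤ decayRate m γ * ostAvgMax m γ θ (6 * s) := hstep
        _ ≤ decayRate m γ ^ (s + 1) := by
            rw [pow_succ']; exact mul_le_mul_of_nonneg_left ih (decayRate_pos m γ).le
  exact (ostAvgMax_antitone γ θ (by omega) (Nat.mul_div_le k 6)).trans (hsix _)

end Decay

lemma pow_div_le_inv_mul_exp {ρ : ℝ} (h0 : 0 < ρ) (h1 : ρ ≤ 1) (k d : ℕ) :
    ρ ^ (k / d) ≤ ρ⁻¹ * Real.exp (Real.log ρ / d * k) := by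
  have hfloor : (k : ℝ) / d < (k / d : ℕ) + 1 := by
    simpa [Nat.floor_div_eq_div] using Nat.lt_floor_add_one ((k : ℝ) / d)
  calc ρ ^ (k / d) = ρ⁻¹ * ρ ^ ((k / d + 1 : ℕ) : ℝ) := by
        rw [Real.rpow_natCast, pow_succ', inv_mul_cancel_left₀ h0.ne']
    _ ≤ ρ⁻¹ * ρ ^ ((k : ℝ) / d) := by
        refine mul_le_mul_of_nonneg_left ?_ (inv_nonneg.2 h0.le)
        exact Real.rpow_le_rpow_of_exponent_ge h0 h1 (by push_cast; exact hfloor.le)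
    _ = ρ⁻¹ * Real.exp (Real.log ρ / d * k) := by
        rw [Real.rpow_def_of_pos h0]; ring_nf

theorem stmt14 (m : ℕ) (hm : 2 ≤ m) (γ : ℝ) (hγ : nint ((m : ℝ) * γ) ≠ 0) :
    ∃ c η : ℝ, 0 < c ∧ 0 < η ∧ ∀ θ : ℝ, ∀ k : ℕ, 2 ≤ k →
      ‖(1 / (ostq m k : ℂ)) *
          ∑ u ∈ Finset.range (ostq m k), e (γ * (Sfull m u : ℝ) + θ * (u : ℝ))‖ ≤
        η * Real.exp (-c * (k : ℝ)) := by
  set ρ := decayRate m γ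
  have hρ0 : 0 < ρ := decayRate_pos m γ
  have hρ1 : ρ < 1 := decayRate_lt_one hγ
  refine ⟨-Real.log ρ / 6, ρ⁻¹, by linarith [Real.log_neg hρ0 hρ1], inv_pos.2 hρ0,
    fun θ k _ ↦ ?_⟩
  calc _ = ostAvg m γ θ k := by
        rw [ostAvg, ostSum, norm_mul, norm_div, norm_one, Complex.norm_natCast,
          one_div_mul_eq_div]
    _ ≤ ostAvgMax m γ θ k := le_max_right _ _
    _ ≤ ρ ^ (k / 6) := ostAvgMax_le_decayRate_pow γ θ hm k
    _ ≤ ρ⁻¹ * Real.exp (Real.log ρ / (6 : ℕ) * k) :=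
        pow_div_le_inv_mul_exp hρ0 hρ1.le k 6
    _ = ρ⁻¹ * Real.exp (-(-Real.log ρ / 6) * k) := by push_cast; ring_nf
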